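/- In misère Partizan Kayles, if the total number of squares in a position G is congruent to 2 modulo 3, then Left moving first loses G, so o⁻(G) ∈ {R, P}. -/

import Mathlib

/-- Add a strip of length `k` to a position (strips of length 0 are discarded). -/
def addStrip (m : Multiset ℕ) (k : ℕ) : Multiset ℕ := if k = 0 then m else k ::ₘ m

/-- Left removes one square from a strip of length `n ≥ 1`, leaving strips `i` and `n-1-i`. -/
def LeftMove (G G' : Multiset ℕ) : Prop :=
  ∃ n ∈ G, ∃ i, i + 1 ≤ n ∧ G' = addStrip (addStrip (G.erase n) i) (n - 1 - i)

/-- Right removes two adjacent squares from a strip of length `n ≥ 2`, leaving `i` and `n-2-i`. -/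
def RightMove (G G' : Multiset ℕ) : Prop :=
  ∃ n ∈ G, ∃ i, i + 2 ≤ n ∧ G' = addStrip (addStrip (G.erase n) i) (n - 2 - i)

mutual
  /-- Misère play: Left, to move, wins (a player unable to move wins). -/
  inductive LeftWinsMover : Multiset ℕ → Prop
    | cannot (G : Multiset ℕ) : (¬ ∃ G', LeftMove G G') → LeftWinsMover G
    | move (G G' : Multiset ℕ) : LeftMove G G' → LeftWinsWaiter G' → LeftWinsMover G
  /-- Misère play: Left wins with Right to move. -/
  inductive LeftWinsWaiter : Multiset ℕ → Prop
    | intro (G : Multiset ℕ) : (∃ G', RightMove G G') →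
        (∀ G', RightMove G G' → LeftWinsMover G') → LeftWinsWaiter G
end

inductive Outcome | L | N | P | R
  deriving DecidableEq

open Classical in
/-- The misère outcome `o⁻(G)`. -/
noncomputable def outcome (G : Multiset ℕ) : Outcome :=
  if LeftWinsMover G then (if LeftWinsWaiter G then Outcome.L else Outcome.N)
  else (if LeftWinsWaiter G then Outcome.P else Outcome.R)

/-- The partial order on outcomes: `L` greatest, `R` least, `N` and `P` incomparable. -/
def Outcome.le (a b : Outcome) : Prop := a = b ∨ a = Outcome.R ∨ b = Outcome.L

/-- `pos k j` is the position `kS₁ + jS₂`. -/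
def pos (k j : ℕ) : Multiset ℕ := Multiset.replicate k 1 + Multiset.replicate j 2

/-!
A Left move removes one square and a Right move two, so a Left move answered by any Right move
lowers the number of squares by three. When that number is `2 mod 3` it is positive, so Left is
never stuck; and whenever Left wins after moving, Right must have some reply, which brings the
count back to `2 mod 3`. Strong induction on the number of squares shows Left can never win.
-/

@[simp]
lemma addStrip_sum (m : Multiset ℕ) (k : ℕ) : (addStrip m k).sum = m.sum + k := by
  unfold addStrip
  split <;> simp_all [add_comm]

lemma LeftMove.sum_add_one {G G' : Multiset ℕ} (h : LeftMove G G') : G'.sum + 1 = G.sum := by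
  obtain ⟨n, hn, i, hi, rfl⟩ := h
  have := Multiset.sum_erase hn
  simp only [addStrip_sum]
  omega

lemma RightMove.sum_add_two {G G' : Multiset ℕ} (h : RightMove G G') : G'.sum + 2 = G.sum := by
  obtain ⟨n, hn, i, hi, rfl⟩ := h
  have := Multiset.sum_erase hn
  simp only [addStrip_sum]
  omega

lemma exists_leftMove_of_sum_ne_zero {G : Multiset ℕ} (h : G.sum ≠ 0) : ∃ G', LeftMove G G' := by
  obtain ⟨n, hn, hn0⟩ : ∃ n ∈ G, n ≠ 0 := by
    by_contra! hall
    exact h (Multiset.sum_eq_zero hall)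
  exact ⟨_, n, hn, 0, by omega, rfl⟩

theorem not_leftWinsMover_of_sum_mod_three {G : Multiset ℕ} (h : G.sum % 3 = 2) :
    ¬ LeftWinsMover G := by
  induction hs : G.sum using Nat.strong_induction_on generalizing G with
  | _ s ih =>
    subst hs
    rintro (⟨_, hstuck⟩ | ⟨_, G', hleft, ⟨_, ⟨G'', hright⟩, hreplies⟩⟩)
    · exact hstuck (exists_leftMove_of_sum_ne_zero (by omega))
    · have h₁ := hleft.sum_add_one
      have h₂ := hright.sum_add_two
      exact ih G''.sum (by omega) (by omega) rfl (hreplies G'' hright)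

lemma outcome_eq_R_or_P_of_not_leftWinsMover {G : Multiset ℕ} (h : ¬ LeftWinsMover G) :
    outcome G = Outcome.R ∨ outcome G = Outcome.P := by
  unfold outcome
  rw [if_neg h]
  split <;> simp

theorem kayles_sum_two_mod_three (G : Multiset ℕ) (hG : 0 ∉ G)
    (h : G.sum % 3 = 2) :
    ¬ LeftWinsMover G ∧ (outcome G = Outcome.R ∨ outcome G = Outcome.P) :=
  have hLeft := not_leftWinsMover_of_sum_mod_three h
  ⟨hLeft, outcome_eq_R_or_P_of_not_leftWinsMover hLeft⟩
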